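/- Let F ∈ ℂ[X,Y] be such that the complex curve V(F) contains no vertical line (equivalently, the coefficients of F as a polynomial in Y have no common nonconstant factor in ℂ[X]), and assume deg_Y F(z,·) = deg_Y F for the given z ∈ ℂ. Then ∑_{z' : F(z,z')=0 and ∂_Y F(z,z')=0} (mult(z', F(z,Y)) − 1) ≤ mult(z, Disc_Y(F)), where Disc_Y(F) ∈ ℂ[X] is the discriminant of F with respect to Y. -/

import Mathlib

open Polynomial

/-- The Sylvester matrix of two polynomials f, g of respective degrees p, q. -/
def sylvester {A : Type*} [CommRing A] (f g : Polynomial A) (p q : ℕ) :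
    Matrix (Fin (q + p)) (Fin (q + p)) A :=
  Matrix.of fun i j =>
    if (j : ℕ) < q then
      (if (i : ℕ) ≤ p + j then f.coeff (p + (j : ℕ) - i) else 0)
    else
      (if (i : ℕ) ≤ j then g.coeff ((j : ℕ) - i) else 0)

/-- The resultant of two polynomials f, g of respective degrees p, q. -/
noncomputable def resultantOf {A : Type*} [CommRing A] (f g : Polynomial A) (p q : ℕ) : A :=
  (_root_.sylvester f g p q).det

/-!
Write `f = F(z, ·)` and `g = gcd(f, f')`. Because `lc_Y F` does not vanish at `z`, the
Sylvester matrix of `F` and `∂_Y F` specializes at `X = z` to that of `f` and `f'`, whose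
kernel contains the coefficient vectors of the syzygies `(X ^ k * f' / g, -(X ^ k * f / g))`,
`k < deg g`. These are in echelon form, so an invertible constant change of columns makes
`deg g` columns of the Sylvester matrix divisible by `X - z`; hence `(X - z) ^ deg g` divides
`Res_Y(F, ∂_Y F) = lc_Y F · Disc_Y F`. Finally a root of `f` of multiplicity `μ` is a root of
`f'` of multiplicity `μ - 1`, so `deg g ≥ ∑ (μ - 1)`.
-/

open Matrix

theorem pow_card_dvd_det_of_dvd_col {A ι : Type*} [CommRing A] [Fintype ι] [DecidableEq ι]
    (π : A) (N : Matrix ι ι A) (s : Finset ι) (h : ∀ i, ∀ j ∈ s, π ∣ N i j) :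
    π ^ s.card ∣ N.det := by
  choose! Q hQ using h
  have hN : N = (of fun i j => if j ∈ s then Q i j else N i j) *
      diagonal fun j => if j ∈ s then π else 1 := by
    ext i j
    by_cases hj : j ∈ s <;> simp [hj, mul_comm, ← hQ i j]
  rw [hN, det_mul, det_diagonal, Finset.prod_ite_mem, Finset.univ_inter, Finset.prod_const]
  exact dvd_mul_left _ _

theorem X_sub_C_pow_card_dvd_det {R ι : Type*} [CommRing R] [Fintype ι] [DecidableEq ι]
    (M : Matrix ι ι R[X]) (P : Matrix ι ι R) (hP : IsUnit P.det) (z : R) (s : Finset ι)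
    (hker : ∀ j ∈ s, M.map (eval z) *ᵥ (fun i => P i j) = 0) :
    (X - C z) ^ s.card ∣ M.det := by
  have hmap : (M * P.map C).map (eval z) = M.map (eval z) * P := by
    rw [← coe_evalRingHom, Matrix.map_mul, Matrix.map_map]
    congr 2
    ext
    simp
  have hcol : ∀ i, ∀ j ∈ s, X - C z ∣ (M * P.map C) i j := fun i j hj => by
    rw [dvd_iff_isRoot, IsRoot, ← Matrix.map_apply (f := eval z), hmap]
    exact congrFun (hker j hj) i
  have := pow_card_dvd_det_of_dvd_col _ _ s hcol
  rwa [det_mul, ← RingHom.mapMatrix_apply, ← RingHom.map_det,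
    (isUnit_C.mpr hP).dvd_mul_right] at this

theorem X_sub_C_pow_dvd_det_of_echelon_kernel {K : Type*} [Field K] {N m : ℕ} (hm : m ≤ N)
    (M : Matrix (Fin N) (Fin N) K[X]) (z : K) (v : Fin m → Fin N → K)
    (hker : ∀ k, M.map (eval z) *ᵥ v k = 0) (hpivot : ∀ k, v k (Fin.castLE hm k) ≠ 0)
    (hzero : ∀ (k : Fin m) (i : Fin N), (i : ℕ) < k → v k i = 0) :
    (X - C z) ^ m ∣ M.det := by
  let P : Matrix (Fin N) (Fin N) K :=
    of fun i j => if h : (j : ℕ) < m then v ⟨j, h⟩ i else if i = j then 1 else 0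
  have hlower : P.IsLowerTriangular := fun i j (hij : j > i) => by
    by_cases h : (j : ℕ) < m
    · simpa [P, h] using hzero ⟨j, h⟩ i hij
    · simp [P, h, hij.ne]
  have hdiag : ∀ i, P i i ≠ 0 := fun i => by
    by_cases h : (i : ℕ) < m
    · simpa [P, h] using hpivot ⟨i, h⟩
    · simp [P, h]
  have hP : IsUnit P.det := by
    rw [det_of_isLowerTriangular P hlower, isUnit_iff_ne_zero]
    exact Finset.prod_ne_zero_iff.mpr fun i _ => hdiag i
  simpa using X_sub_C_pow_card_dvd_det M P hP z (Finset.univ.map (Fin.castLEEmb hm)) <| by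
    simp only [Finset.mem_map, Finset.mem_univ, true_and, forall_exists_index]
    rintro _ k rfl
    simpa [P] using hker k

section Sylvester

variable {A : Type*} [CommRing A]

theorem sum_fin_C_coeff_mul_X_pow_rev (a : A[X]) {q : ℕ} (ha : a.degree < q) :
    ∑ k : Fin q, C (a.coeff (q - 1 - k)) * X ^ (q - 1 - k) = a := by
  rcases eq_or_ne a 0 with rfl | ha0
  · simp
  rw [Fin.sum_univ_eq_sum_range fun k => C (a.coeff (q - 1 - k)) * X ^ (q - 1 - k),
    Finset.sum_range_reflect fun k => C (a.coeff k) * X ^ k,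
    ← as_sum_range_C_mul_X_pow' a ((natDegree_lt_iff_degree_lt ha0).mpr ha)]

theorem sylvester_apply (f g : A[X]) (p q : ℕ) (i j : Fin (q + p)) :
    _root_.sylvester f g p q i j =
      (if (j : ℕ) < q then X ^ (q - 1 - j) * f else X ^ (q + p - 1 - j) * g).coeff
        (q + p - 1 - i) := by
  have := i.2
  simp only [_root_.sylvester, Matrix.of_apply]
  split_ifs <;> rw [coeff_X_pow_mul'] <;> split_ifs <;> first | rfl | omega | congr 1; omega

theorem sylvester_map {B : Type*} [CommRing B] (φ : A →+* B) (f g : A[X]) (p q : ℕ) :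
    (_root_.sylvester f g p q).map φ = _root_.sylvester (f.map φ) (g.map φ) p q := by
  ext i j
  simp only [_root_.sylvester, Matrix.map_apply, Matrix.of_apply, coeff_map]
  split_ifs <;> simp

def sylvesterVec (a b : A[X]) (p q : ℕ) : Fin (q + p) → A :=
  fun j => if (j : ℕ) < q then a.coeff (q - 1 - j) else b.coeff (q + p - 1 - j)

theorem sylvester_mulVec_sylvesterVec (f g a b : A[X]) {p q : ℕ} (ha : a.degree < q)
    (hb : b.degree < p) :
    _root_.sylvester f g p q *ᵥ sylvesterVec a b p q =
      fun i : Fin (q + p) => (a * f + b * g).coeff (q + p - 1 - i) := by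
  have hsum : ∑ j : Fin (q + p), (if (j : ℕ) < q then X ^ (q - 1 - j) * f
      else X ^ (q + p - 1 - j) * g) * C (sylvesterVec a b p q j) = a * f + b * g := by
    have hb' : ∀ k : Fin p, q + p - 1 - (q + k) = p - 1 - k := fun k => by omega
    simp only [Fin.sum_univ_add, Fin.val_castAdd, Fin.val_natAdd, sylvesterVec, Fin.is_lt,
      if_true, add_lt_iff_neg_left, not_lt_zero, if_false, hb']
    conv_rhs => rw [← sum_fin_C_coeff_mul_X_pow_rev a ha, ← sum_fin_C_coeff_mul_X_pow_rev b hb]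
    simp only [Finset.sum_mul]
    exact congrArg₂ (· + ·) (Finset.sum_congr rfl fun _ _ => by ring)
      (Finset.sum_congr rfl fun _ _ => by ring)
  ext i
  simp only [Matrix.mulVec, dotProduct, sylvester_apply, ← hsum, finsetSum_coeff, coeff_mul_C]

end Sylvester

theorem X_sub_C_pow_natDegree_dvd_resultantOf {K : Type*} [Field K] (F G : K[X][X]) (p q : ℕ)
    (z : K) {g : K[X]} (hgF : g ∣ F.map (evalRingHom z)) (hgG : g ∣ G.map (evalRingHom z))
    (hF : (F.map (evalRingHom z)).natDegree ≤ p) (hG0 : G.map (evalRingHom z) ≠ 0)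
    (hG : (G.map (evalRingHom z)).natDegree = q) :
    (X - C z) ^ g.natDegree ∣ resultantOf F G p q := by
  obtain ⟨B, hB⟩ := hgF
  obtain ⟨A, hA⟩ := hgG
  set m := g.natDegree
  have hg0 : g ≠ 0 := by rintro rfl; simp_all
  have hA0 : A ≠ 0 := by rintro rfl; simp_all
  have hAdeg : m + A.natDegree = q := by rw [← hG, hA, natDegree_mul hg0 hA0]
  let a : Fin m → K[X] := fun k => X ^ (m - 1 - k) * A
  let b : Fin m → K[X] := fun k => -(X ^ (m - 1 - k) * B)
  have ha : ∀ k, (a k).natDegree = q - 1 - k := fun k => by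
    have := k.2
    simp only [a, natDegree_X_pow_mul (hp := hA0)]
    omega
  have ha_lt : ∀ k, (a k).degree < q := fun k => by
    have := k.2
    rw [degree_eq_natDegree (mul_ne_zero (pow_ne_zero _ X_ne_zero) hA0), ha k]
    exact_mod_cast (by omega : q - 1 - (k : ℕ) < q)
  have hb_lt : ∀ k, (b k).degree < p := fun k => by
    rcases eq_or_ne B 0 with rfl | hB0
    · simp [b]
    have : m + B.natDegree ≤ p := by rwa [hB, natDegree_mul hg0 hB0] at hF
    have := k.2
    rw [degree_neg, degree_eq_natDegree (mul_ne_zero (pow_ne_zero _ X_ne_zero) hB0),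
      natDegree_X_pow_mul (hp := hB0)]
    exact_mod_cast (by omega : B.natDegree + (m - 1 - k) < p)
  refine X_sub_C_pow_dvd_det_of_echelon_kernel (by omega) _ z
    (fun k => sylvesterVec (a k) (b k) p q) (fun k => ?_) (fun k => ?_) (fun k i hik => ?_)
  · have hsyz : a k * (g * B) + b k * (g * A) = 0 := by simp only [a, b]; ring
    rw [← coe_evalRingHom, sylvester_map,
      sylvester_mulVec_sylvesterVec _ _ _ _ (ha_lt k) (hb_lt k), hA, hB, hsyz]
    rfl
  · have hkq : (k : ℕ) < q := by omega
    have hlead : (a k).leadingCoeff ≠ 0 :=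
      leadingCoeff_ne_zero.mpr (mul_ne_zero (pow_ne_zero _ X_ne_zero) hA0)
    simpa [sylvesterVec, hkq, leadingCoeff, ha k] using hlead
  · have hiq : (i : ℕ) < q := by omega
    simp only [sylvesterVec, hiq, if_true]
    exact coeff_eq_zero_of_natDegree_lt (by rw [ha k]; omega)

theorem sum_rootMultiplicity_sub_one_le_natDegree_gcd_derivative {K : Type*} [Field K]
    [CharZero K] [DecidableEq K] {f : K[X]} (hf : f ≠ 0) :
    ∑ a ∈ f.roots.toFinset, (f.rootMultiplicity a - 1) ≤
      (gcd f (derivative f)).natDegree := by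
  set S := f.roots - f.roots.dedup
  have hcount : ∀ a, S.count a = f.rootMultiplicity a - 1 := fun a => by
    by_cases ha : f.IsRoot a
    · simp [S, Multiset.count_sub, mem_roots hf, ha.eq_zero]
    · simp [S, Multiset.count_sub, rootMultiplicity_eq_zero ha]
  have hdvd : (S.map fun a => X - C a).prod ∣ gcd f (derivative f) := by
    refine dvd_gcd ((S.prod_X_sub_C_dvd_iff_le_roots hf).mpr (Multiset.sub_le_self _ _)) ?_
    rcases eq_or_ne (derivative f) 0 with hf' | hf'
    · rw [hf']
      exact dvd_zero _
    refine (S.prod_X_sub_C_dvd_iff_le_roots hf').mpr (Multiset.le_iff_count.mpr fun a => ?_)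
    rw [hcount, count_roots]
    exact rootMultiplicity_sub_one_le_derivative_rootMultiplicity f a
  calc ∑ a ∈ f.roots.toFinset, (f.rootMultiplicity a - 1)
      = ∑ a ∈ f.roots.toFinset, S.count a := Finset.sum_congr rfl fun a _ => (hcount a).symm
    _ = S.card := Multiset.sum_count_eq_card fun a ha =>
        Multiset.mem_toFinset.mpr (Multiset.mem_of_le (Multiset.sub_le_self _ _) ha)
    _ = (S.map fun a => X - C a).prod.natDegree :=
        (natDegree_multiset_prod_X_sub_C_eq_card S).symm
    _ ≤ (gcd f (derivative f)).natDegree :=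
        natDegree_le_of_dvd hdvd (gcd_ne_zero_of_left hf)

theorem sum_mult_sub_one_le_mult_disc_general
    (F : Polynomial (Polynomial ℂ)) (n : ℕ) (hn : F.natDegree = n) (hn1 : 1 ≤ n)
    (D : Polynomial ℂ) (hD : F.leadingCoeff * D = resultantOf F (derivative F) n (n - 1))
    (hD0 : D ≠ 0)
    (z : ℂ) (hlc : (F.leadingCoeff).eval z ≠ 0) :
    ∑ z' ∈ (F.map (evalRingHom z)).roots.toFinset.filter
        (fun z' => ((derivative F).map (evalRingHom z)).eval z' = 0),
      ((F.map (evalRingHom z)).rootMultiplicity z' - 1) ≤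
      D.rootMultiplicity z := by
  set f := F.map (evalRingHom z)
  have hf : f.natDegree = n := by rw [natDegree_map_of_leadingCoeff_ne_zero _ hlc, hn]
  have hf0 : f ≠ 0 := by rintro h; simp [h] at hf; omega
  have hf' : (derivative F).map (evalRingHom z) = derivative f := (derivative_map F _).symm
  have hlcD : F.leadingCoeff * D ≠ 0 := mul_ne_zero (by rintro h; simp [h] at hlc) hD0
  have hres : (X - C z) ^ (gcd f (derivative f)).natDegree ∣ F.leadingCoeff * D := by
    rw [hD]
    refine X_sub_C_pow_natDegree_dvd_resultantOf F _ n (n - 1) z (gcd_dvd_left _ _)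
      (hf' ▸ gcd_dvd_right _ _) hf.le ?_ ?_ <;> rw [hf']
    · rw [Ne, derivative_eq_zero]; omega
    · rw [natDegree_derivative, hf]
  calc _ ≤ ∑ a ∈ f.roots.toFinset, (f.rootMultiplicity a - 1) :=
        Finset.sum_le_sum_of_subset (Finset.filter_subset _ _)
    _ ≤ (gcd f (derivative f)).natDegree :=
        sum_rootMultiplicity_sub_one_le_natDegree_gcd_derivative hf0
    _ ≤ (F.leadingCoeff * D).rootMultiplicity z := (le_rootMultiplicity_iff hlcD).mpr hres
    _ = D.rootMultiplicity z := by
        rw [rootMultiplicity_mul hlcD, rootMultiplicity_eq_zero hlc, zero_add]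

/-- Let F ∈ ℂ[X][Y] be such that V_ℂ(F) contains no vertical line, let
Disc_Y(F) ∈ ℂ[X] be the discriminant of F in Y (lc_Y(F)·Disc_Y(F) = Res_Y(F,∂_Y F),
nonzero), and let z ∈ ℂ be such that deg_Y F(z,·) = deg_Y F.  Then
∑_{z' : F(z,z') = ∂_Y F(z,z') = 0} (mult(z', F(z,Y)) − 1) ≤ mult(z, Disc_Y(F)). -/
theorem sum_mult_sub_one_le_mult_disc
    (F : Polynomial (Polynomial ℂ)) (n : ℕ) (hn : F.natDegree = n) (hn1 : 1 ≤ n)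
    (hnovert : ∀ d : Polynomial ℂ, (∀ i, d ∣ F.coeff i) → IsUnit d)
    (D : Polynomial ℂ) (hD : F.leadingCoeff * D = resultantOf F (derivative F) n (n - 1))
    (hD0 : D ≠ 0)
    (z : ℂ) (hlc : (F.leadingCoeff).eval z ≠ 0) :
    ∑ z' ∈ (F.map (evalRingHom z)).roots.toFinset.filter
        (fun z' => ((derivative F).map (evalRingHom z)).eval z' = 0),
      ((F.map (evalRingHom z)).rootMultiplicity z' - 1) ≤
      D.rootMultiplicity z :=
  sum_mult_sub_one_le_mult_disc_general F n hn hn1 D hD hD0 z hlc
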